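/- arXiv:math/0506276 — 4 statements merged into one kernel-verified Lean document; each statement's English description precedes it below -/
import Mathlib

section
/- There exist strictly positive weights λ_{ij} > 0 (i, j ∈ ℕ) with λ_{ij} = λ_{ji}, and real infinite matrices x = (x_{ij}) and y = (y_{ij}) with Σ_{i,j} x_{ij}²/λ_{ij}² < ∞ and Σ_{i,j} y_{ij}²/λ_{ij}² < ∞ (so x and y lie in the weighted space g_∞, and in particular are Hilbert–Schmidt), such that the commutator [x,y] = xy − yx (whose entries are well defined absolutely convergent sums) satisfies Σ_{i,j} ([x,y])_{ij}²/λ_{ij}² = ∞. Consequently g_∞ is not closed under the commutator bracket, i.e., g_∞ is not a Lie algebra. -/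
noncomputable section

/-- The weights: `1` on the first row/column, `1/(i*j)` elsewhere. -/
def lamW (i j : ℕ) : ℝ := if i = 0 ∨ j = 0 then 1 else 1 / (i * j : ℝ)

/-- `x` is supported on row `0`, with `x 0 j = 1/j` for `j ≠ 0`. -/
def xW (i j : ℕ) : ℝ := if i = 0 ∧ j ≠ 0 then 1 / (j : ℝ) else 0

/-- `y` is the matrix unit `e_{1,0}`. -/
def yW (i j : ℕ) : ℝ := if i = 1 ∧ j = 0 then 1 else 0

lemma summable_G : Summable (fun j : ℕ => (if j = 0 then 0 else 1 / (j : ℝ) ^ 2)) := by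
  have h : Summable (fun j : ℕ => 1 / (j : ℝ) ^ 2) :=
    Real.summable_one_div_nat_pow.2 one_lt_two
  refine h.congr fun j => ?_
  by_cases hj : j = 0 <;> simp [hj]

lemma summable_xsq :
    Summable (fun p : ℕ × ℕ => (xW p.1 p.2) ^ 2) := by
  have h := Summable.mul_of_nonneg
    (f := fun i : ℕ => if i = 0 then (1 : ℝ) else 0)
    (g := fun j : ℕ => (if j = 0 then 0 else 1 / (j : ℝ) ^ 2))
    (summable_of_ne_finset_zero (s := {0}) (by intro b hb; simp at hb; simp [hb]))
    summable_G
    (fun i => by by_cases hi : i = 0 <;> simp [hi])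
    (fun j => by dsimp only; split <;> positivity)
  refine h.congr fun p => ?_
  rcases p with ⟨i, j⟩
  by_cases hi : i = 0
  · by_cases hj : j = 0 <;> simp [xW, hi, hj, div_pow]
  · simp [xW, hi]

/-- There exist strictly positive symmetric weights `λ_{ij}` and
infinite real matrices `x, y` lying in the weighted space `g_∞` (i.e.
`Σ x_{ij}²/λ_{ij}² < ∞`, and in particular Hilbert–Schmidt: `Σ x_{ij}² < ∞`),
whose commutator `[x,y] = xy − yx` has well-defined (absolutely convergent)
entries but satisfies `Σ ([x,y])_{ij}²/λ_{ij}² = ∞`; hence `g_∞` is not closed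
under the commutator bracket, i.e. it is not a Lie algebra. -/
theorem stmt9 :
    ∃ lam : ℕ → ℕ → ℝ, (∀ i j, 0 < lam i j) ∧ (∀ i j, lam i j = lam j i) ∧
      ∃ x y : ℕ → ℕ → ℝ,
        Summable (fun p : ℕ × ℕ => (x p.1 p.2) ^ 2 / (lam p.1 p.2) ^ 2) ∧
        Summable (fun p : ℕ × ℕ => (y p.1 p.2) ^ 2 / (lam p.1 p.2) ^ 2) ∧
        Summable (fun p : ℕ × ℕ => (x p.1 p.2) ^ 2) ∧
        Summable (fun p : ℕ × ℕ => (y p.1 p.2) ^ 2) ∧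
        (∀ i j, Summable (fun k => |x i k * y k j|)) ∧
        (∀ i j, Summable (fun k => |y i k * x k j|)) ∧
        ¬ Summable (fun p : ℕ × ℕ =>
            ((∑' k, x p.1 k * y k p.2) - (∑' k, y p.1 k * x k p.2)) ^ 2 /
              (lam p.1 p.2) ^ 2) := by
  refine ⟨lamW, ?_, ?_, xW, yW, ?_, ?_, summable_xsq, ?_, ?_, ?_, ?_⟩
  · -- positivity
    intro i j
    unfold lamW
    split
    · norm_num
    · rename_i h
      push_neg at h
      have hi : 0 < (i : ℝ) := by exact_mod_cast Nat.pos_of_ne_zero h.1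
      have hj : 0 < (j : ℝ) := by exact_mod_cast Nat.pos_of_ne_zero h.2
      positivity
  · -- symmetry
    intro i j
    unfold lamW
    by_cases h : i = 0 ∨ j = 0
    · rw [if_pos h, if_pos (Or.symm h)]
    · rw [if_neg h, if_neg (fun hc => h (Or.symm hc)), mul_comm]
  · -- x²/lam² summable : on row 0 lam = 1, elsewhere x = 0
    refine summable_xsq.congr fun p => ?_
    rcases p with ⟨i, j⟩
    by_cases hi : i = 0
    · simp [lamW, hi]
    · simp [xW, hi]
  · -- y²/lam² summable : finite support
    refine summable_of_ne_finset_zero (s := {((1 : ℕ), (0 : ℕ))}) ?_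
    rintro ⟨i, j⟩ hb
    simp only [Finset.mem_singleton, Prod.mk.injEq, not_and_or] at hb
    have : yW i j = 0 := by
      unfold yW
      rcases hb with h | h <;> simp [h]
    simp [this]
  · -- y² summable : finite support
    refine summable_of_ne_finset_zero (s := {((1 : ℕ), (0 : ℕ))}) ?_
    rintro ⟨i, j⟩ hb
    simp only [Finset.mem_singleton, Prod.mk.injEq, not_and_or] at hb
    unfold yW
    rcases hb with h | h <;> simp [h]
  · -- rows of x·y absolutely summable : y k j ≠ 0 only for k = 1
    intro i j
    refine summable_of_ne_finset_zero (s := {1}) ?_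
    intro k hk
    simp only [Finset.mem_singleton] at hk
    simp [yW, hk]
  · -- rows of y·x absolutely summable : y i k ≠ 0 only for k = 0
    intro i j
    refine summable_of_ne_finset_zero (s := {0}) ?_
    intro k hk
    simp only [Finset.mem_singleton] at hk
    simp [yW, hk]
  · -- the commutator is not in g_∞
    intro hsum
    have hinj : Function.Injective (fun j : ℕ => ((1 : ℕ), j + 1)) := by
      intro a b hab
      simpa using hab
    have h2 := hsum.comp_injective hinj
    have hval : (fun j : ℕ =>
        ((∑' k, xW 1 k * yW k (j + 1)) - (∑' k, yW 1 k * xW k (j + 1))) ^ 2 /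
          (lamW 1 (j + 1)) ^ 2) = fun _ : ℕ => (1 : ℝ) := by
      funext j
      have h1 : (∑' k, xW 1 k * yW k (j + 1)) = 0 := by
        simp [xW]
      have h2' : (∑' k, yW 1 k * xW k (j + 1)) = 1 / ((j : ℝ) + 1) := by
        rw [tsum_eq_single 0 (fun k hk => by simp [yW, hk])]
        simp [yW, xW]
      have hlam : lamW 1 (j + 1) = 1 / ((j : ℝ) + 1) := by
        simp [lamW]
      have hne : (1 / ((j : ℝ) + 1)) ≠ 0 := by positivity
      rw [h1, h2', hlam, zero_sub, neg_sq, div_self (by positivity)]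
    rw [show ((fun p : ℕ × ℕ =>
        ((∑' k, xW p.1 k * yW k p.2) - (∑' k, yW p.1 k * xW k p.2)) ^ 2 /
          (lamW p.1 p.2) ^ 2) ∘ (fun j : ℕ => ((1 : ℕ), j + 1)))
        = fun j : ℕ =>
        ((∑' k, xW 1 k * yW k (j + 1)) - (∑' k, yW 1 k * xW k (j + 1))) ^ 2 /
          (lamW 1 (j + 1)) ^ 2 from rfl, hval] at h2
    exact one_ne_zero ((summable_const_iff (1 : ℝ)).1 h2)
end
end

section
/- In the general weighted Hilbert–Schmidt Lie algebra, for any i, j and any N > max(i, j), the truncated Ricci curvature is R^N(ξ_{ij}) = (1/4)(6δ_{ij}λ_i⁴ − 4δ_{ij}λ_i⁴N − 2λ_i⁴N − 2λ_j⁴N + 2Σ_{m=1}^N λ_m⁴), where δ is Kronecker's delta. -/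
noncomputable section

open Filter
open scoped RealInnerProductSpace

variable {gi : Type*} [NormedAddCommGroup gi] [InnerProductSpace ℝ gi]

/-- Kronecker delta. -/
def kdel (a b : ℕ) : ℝ := if a = b then 1 else 0

/-- The Riemannian curvature tensor
`R_{x y} w = ∇_{[x,y]} w − ∇_x ∇_y w + ∇_y ∇_x w` built from a Levi-Civita
connection `nab` and a Lie bracket `br`. -/
def Rc (nab br : gi →ₗ[ℝ] gi →ₗ[ℝ] gi) (x y w : gi) : gi :=
  nab (br x y) w - nab x (nab y w) + nab y (nab x w)

/-- The sectional curvature `K(x,y) = ⟪R_{x y} x, y⟫`. -/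
def Ksec (nab br : gi →ₗ[ℝ] gi →ₗ[ℝ] gi) (x y : gi) : ℝ :=
  ⟪Rc nab br x y x, y⟫

/-- The truncated Ricci curvature `R^N(ξ_{ij}) = Σ_{k,m=1}^N K(ξ_{ij}, ξ_{km})`. -/
def RicN (nab br : gi →ₗ[ℝ] gi →ₗ[ℝ] gi) (ξ : ℕ → ℕ → gi) (N i j : ℕ) : ℝ :=
  ∑ k ∈ Finset.Icc 1 N, ∑ m ∈ Finset.Icc 1 N, Ksec nab br (ξ i j) (ξ k m)

/-- The truncated self-adjoint Ricci curvature
`R̂^N(x) = Σ_{i,j=1}^N R_{ξ_{ij} x}(ξ_{ij})`. -/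
def RicHat (nab br : gi →ₗ[ℝ] gi →ₗ[ℝ] gi) (ξ : ℕ → ℕ → gi) (N : ℕ) (x : gi) : gi :=
  ∑ i ∈ Finset.Icc 1 N, ∑ j ∈ Finset.Icc 1 N, Rc nab br (ξ i j) x (ξ i j)

/-!
By the Koszul formula and the bracket relations,
`∇_{ξ_ab} ξ_cd = ½ ([ξ_ab, ξ_cd] − (ad ξ_cd)* ξ_ab − (ad ξ_ab)* ξ_cd)`, where each adjoint term is
again a combination of at most two basis vectors; totality of the basis turns the Koszul identity,
tested against every `ξ_ef`, into this equation of vectors. Expanding `R_{xy}` by bilinearity then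
makes `K(ξ_ij, ξ_km)` an explicit combination of Kronecker deltas in `i, j, k, m`, and in the sum
over `1 ≤ k, m ≤ N` each delta picks out a single term, because `i` and `j` lie in that range.
-/

theorem eq_of_forall_inner_of_dense_span {𝕜 E ι : Type*} [RCLike 𝕜] [NormedAddCommGroup E]
    [InnerProductSpace 𝕜 E] {v : ι → E} (hv : Dense (Submodule.span 𝕜 (Set.range v) : Set E))
    {x y : E} (h : ∀ i, inner 𝕜 x (v i) = inner 𝕜 y (v i)) : x = y := by
  have hspan : Submodule.span 𝕜 (Set.range v) ≤ LinearMap.ker (innerₛₗ 𝕜 (x - y)) :=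
    Submodule.span_le.mpr <| by rintro _ ⟨i, rfl⟩; simp [h]
  exact hv.eq_of_inner_left 𝕜 fun w hw => by
    simpa [inner_sub_left, sub_eq_zero] using hspan hw

section WeightedHilbertSchmidt

variable (lam : ℕ → ℝ) (ξ : ℕ → ℕ → gi) (br nab : gi →ₗ[ℝ] gi →ₗ[ℝ] gi)

theorem inner_basis_eq_ite (honb : Orthonormal ℝ (fun p : ℕ × ℕ => ξ p.1 p.2)) (a b c d : ℕ) :
    ⟪ξ a b, ξ c d⟫ = (if a = c then 1 else 0) * (if b = d then 1 else 0) := by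
  rw [ite_zero_mul_ite_zero, mul_one, orthonormal_iff_ite.mp honb (a, b) (c, d)]
  simp only [Prod.mk.injEq]

/-- `adStar lam ξ c d a b = (ad ξ_cd)* ξ_ab`. -/
def adStar (c d a b : ℕ) : gi :=
  (if a = c then lam d ^ 2 else 0) • ξ d b - (if b = d then lam c ^ 2 else 0) • ξ a c

def IsWeightedHSBracket : Prop :=
  ∀ i j k m : ℕ, br (ξ i j) (ξ k m) =
    (if j = k then lam j ^ 2 else 0) • ξ i m - (if i = m then lam i ^ 2 else 0) • ξ k j

def IsKoszulConnection : Prop :=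
  ∀ x y z : gi, ⟪nab x y, z⟫ = (1 / 2) * (⟪br x y, z⟫ - ⟪br y z, x⟫ + ⟪br z x, y⟫)

variable {lam ξ br nab}

theorem IsWeightedHSBracket.swap (hbr : IsWeightedHSBracket lam ξ br) (a b c d : ℕ) :
    br (ξ c d) (ξ a b) = -br (ξ a b) (ξ c d) := by
  rw [hbr, hbr, neg_sub]
  congr 1 <;> split_ifs <;> simp_all

theorem IsWeightedHSBracket.inner_eq_inner_adStar (hbr : IsWeightedHSBracket lam ξ br)
    (honb : Orthonormal ℝ (fun p : ℕ × ℕ => ξ p.1 p.2)) (a b c d e f : ℕ) :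
    ⟪br (ξ c d) (ξ e f), ξ a b⟫ = ⟪adStar lam ξ c d a b, ξ e f⟫ := by
  simp only [hbr c d e f, adStar, inner_sub_left, real_inner_smul_left, inner_basis_eq_ite ξ honb]
  split_ifs <;> subst_vars <;> first | (exfalso; omega) | ring

theorem IsKoszulConnection.apply_basis (hnab : IsKoszulConnection br nab)
    (hbr : IsWeightedHSBracket lam ξ br) (honb : Orthonormal ℝ (fun p : ℕ × ℕ => ξ p.1 p.2))
    (htot : Dense (Submodule.span ℝ (Set.range fun p : ℕ × ℕ => ξ p.1 p.2) : Set gi))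
    (a b c d : ℕ) :
    nab (ξ a b) (ξ c d) = (1 / 2 : ℝ) •
      (br (ξ a b) (ξ c d) - adStar lam ξ c d a b - adStar lam ξ a b c d) := by
  refine eq_of_forall_inner_of_dense_span htot ?_
  rintro ⟨e, f⟩
  dsimp only
  rw [hnab, hbr.swap a b e f, inner_neg_left, hbr.inner_eq_inner_adStar honb a b c d e f,
    hbr.inner_eq_inner_adStar honb c d a b e f, real_inner_smul_left, inner_sub_left, inner_sub_left]
  ring

theorem ksec_basis (hnab : IsKoszulConnection br nab)
    (hbr : IsWeightedHSBracket lam ξ br) (honb : Orthonormal ℝ (fun p : ℕ × ℕ => ξ p.1 p.2))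
    (htot : Dense (Submodule.span ℝ (Set.range fun p : ℕ × ℕ => ξ p.1 p.2) : Set gi))
    (i j k m : ℕ) :
    Ksec nab br (ξ i j) (ξ k m) =
      (if i = k then -lam i ^ 4 + (1 / 4) * lam j ^ 4 + (1 / 4) * lam m ^ 4 else 0)
      + (if j = m then (1 / 4) * lam i ^ 4 - lam j ^ 4 + (1 / 4) * lam k ^ 4 else 0)
      + (if j = k then (1 / 4) * lam j ^ 4 else 0)
      + (if i = m then (1 / 4) * lam i ^ 4 else 0)
      + (if i = k then (if j = m then (1 / 2) * lam i ^ 4 + (1 / 2) * lam j ^ 4 else 0) else 0)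
      + (if i = k then (if j = k then (if j = m then (3 / 2) * lam i ^ 4 else 0) else 0) else 0)
      - (if i = k then (if j = k then (1 / 2) * lam i ^ 4 else 0) else 0)
      - (if i = k then (if i = m then (1 / 2) * lam i ^ 4 else 0) else 0)
      - (if j = k then (if j = m then (1 / 2) * lam j ^ 4 else 0) else 0)
      - (if j = m then (if i = m then (1 / 2) * lam i ^ 4 else 0) else 0) := by
  -- the `eq_comm` rewrites orient each index equation one way, so `split_ifs` splits on it once
  simp only [Ksec, Rc, hbr _ _ _ _, hnab.apply_basis hbr honb htot, adStar, map_sub, map_smul,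
    LinearMap.sub_apply, LinearMap.smul_apply, smul_sub, smul_smul, inner_sub_left,
    inner_add_left, real_inner_smul_left, inner_basis_eq_ite ξ honb, mul_ite, ite_mul, mul_zero,
    zero_mul, mul_one, @eq_comm ℕ j i, @eq_comm ℕ k i, @eq_comm ℕ k j, @eq_comm ℕ m i,
    @eq_comm ℕ m j, @eq_comm ℕ m k]
  split_ifs <;> (try (exfalso; omega)) <;> (try subst_eqs) <;> ring

end WeightedHilbertSchmidt

theorem stmt11_general {gi : Type*} [NormedAddCommGroup gi] [InnerProductSpace ℝ gi]
    (lam : ℕ → ℝ)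
    (ξ : ℕ → ℕ → gi) (honb : Orthonormal ℝ (fun p : ℕ × ℕ => ξ p.1 p.2))
    (htot : Dense ((Submodule.span ℝ (Set.range fun p : ℕ × ℕ => ξ p.1 p.2) :
      Submodule ℝ gi) : Set gi))
    (br nab : gi →ₗ[ℝ] gi →ₗ[ℝ] gi)
    (hbr : ∀ i j k m : ℕ, br (ξ i j) (ξ k m) =
      (if j = k then (lam j) ^ 2 else 0) • ξ i m -
        (if i = m then (lam i) ^ 2 else 0) • ξ k j)
    (hnab : ∀ x y z : gi,
      ⟪nab x y, z⟫ = (1 / 2) * (⟪br x y, z⟫ - ⟪br y z, x⟫ + ⟪br z x, y⟫))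
    (i j N : ℕ) (hi : 1 ≤ i) (hj : 1 ≤ j) (hN : max i j < N) :
    RicN nab br ξ N i j =
      (1 / 4) * (6 * kdel i j * (lam i) ^ 4 - 4 * kdel i j * (lam i) ^ 4 * (N : ℝ) -
        2 * (lam i) ^ 4 * (N : ℝ) - 2 * (lam j) ^ 4 * (N : ℝ) +
        2 * ∑ m ∈ Finset.Icc 1 N, (lam m) ^ 4) := by
  have hiN : i ∈ Finset.Icc 1 N := Finset.mem_Icc.mpr ⟨hi, by omega⟩
  have hjN : j ∈ Finset.Icc 1 N := Finset.mem_Icc.mpr ⟨hj, by omega⟩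
  simp only [RicN, ksec_basis hnab hbr honb htot, Finset.sum_add_distrib, Finset.sum_sub_distrib,
    Finset.sum_ite_irrel, Finset.sum_ite_eq, Finset.sum_const_zero, hiN, hjN, if_true,
    Finset.sum_const, Nat.card_Icc, Nat.add_sub_cancel, nsmul_eq_mul, ← Finset.mul_sum]
  rcases eq_or_ne i j with rfl | hij
  · simp only [kdel, if_true]
    ring
  · simp only [kdel, if_neg hij, if_neg hij.symm]
    ring

/-- In the general weighted Hilbert-Schmidt Lie algebra, for
indices i, j >= 1 and N > max i j, the truncated Ricci curvature equals
(1/4)(6 d_ij li^4 - 4 d_ij li^4 N - 2 li^4 N - 2 lj^4 N + 2 sum_m lm^4). -/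
theorem stmt11 {gi : Type*} [NormedAddCommGroup gi] [InnerProductSpace ℝ gi]
    (lam : ℕ → ℝ) (hpos : ∀ i, 0 < lam i) (c : ℝ) (hbdd : ∀ i, lam i ≤ c)
    (ξ : ℕ → ℕ → gi) (honb : Orthonormal ℝ (fun p : ℕ × ℕ => ξ p.1 p.2))
    (htot : Dense ((Submodule.span ℝ (Set.range fun p : ℕ × ℕ => ξ p.1 p.2) :
      Submodule ℝ gi) : Set gi))
    (br nab : gi →ₗ[ℝ] gi →ₗ[ℝ] gi)
    (hbr : ∀ i j k m : ℕ, br (ξ i j) (ξ k m) =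
      (if j = k then (lam j) ^ 2 else 0) • ξ i m -
        (if i = m then (lam i) ^ 2 else 0) • ξ k j)
    (hnab : ∀ x y z : gi,
      ⟪nab x y, z⟫ = (1 / 2) * (⟪br x y, z⟫ - ⟪br y z, x⟫ + ⟪br z x, y⟫))
    (i j N : ℕ) (hi : 1 ≤ i) (hj : 1 ≤ j) (hN : max i j < N) :
    RicN nab br ξ N i j =
      (1 / 4) * (6 * kdel i j * (lam i) ^ 4 - 4 * kdel i j * (lam i) ^ 4 * (N : ℝ) -
        2 * (lam i) ^ 4 * (N : ℝ) - 2 * (lam j) ^ 4 * (N : ℝ) +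
        2 * ∑ m ∈ Finset.Icc 1 N, (lam m) ^ 4) :=
  stmt11_general lam ξ honb htot br nab hbr hnab i j N hi hj hN
end
end

section
/- In the general weighted Hilbert–Schmidt Lie algebra with the Hilbert–Schmidt inner product (i.e., λ_i = 1 for all i), for any i, j and any N > max(i, j), the truncated Ricci curvature is R^N(ξ_{ij}) = (1/2)(3δ_{ij} − 2δ_{ij}N − N). -/
set_option maxHeartbeats 1000000


noncomputable section

open Filter
open scoped RealInnerProductSpace

variable {gi : Type*} [NormedAddCommGroup gi] [InnerProductSpace ℝ gi]

lemma kdel_comm' (a b : ℕ) : kdel a b = kdel b a := by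
  unfold kdel; split_ifs with h1 h2 <;> simp_all

lemma Ksec_formula' {gi : Type*} [NormedAddCommGroup gi] [InnerProductSpace ℝ gi]
    (ξ : ℕ → ℕ → gi) (br nab : gi →ₗ[ℝ] gi →ₗ[ℝ] gi)
    (hON : ∀ a b c d : ℕ, ⟪ξ a b, ξ c d⟫ = kdel a c * kdel b d)
    (hb1 : ∀ a b c d : ℕ, br (ξ a b) (ξ c d) = kdel b c • ξ a d - kdel a d • ξ c b)
    (hnb : ∀ a b c d : ℕ, nab (ξ a b) (ξ c d) = (1/2 : ℝ) •
      (kdel b c • ξ a d - kdel a d • ξ c b - kdel c a • ξ d b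
        + kdel d b • ξ a c + kdel b d • ξ c a - kdel a c • ξ b d))
    (i j k m : ℕ) : Ksec nab br (ξ i j) (ξ k m) =
      kdel j k/4 + kdel i m/4 - kdel i k/2 - kdel j m/2
      - (1/2)*(kdel j k*kdel j m) + kdel i k*kdel j m - (1/2)*(kdel i k*kdel i m)
      - (1/2)*(kdel i j*kdel j m) - (1/2)*(kdel i j*kdel i k)
      + (3/2)*(kdel i j*kdel i k*kdel i m) := by
  simp only [Ksec, Rc, hb1, map_sub, map_add, map_smul, LinearMap.sub_apply,
    LinearMap.add_apply, LinearMap.smul_apply, hnb, smul_sub, smul_add,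
    inner_sub_left, inner_add_left, real_inner_smul_left, hON]
  ring_nf
  clear hON hb1 hnb
  by_cases h1 : i = j <;> by_cases h2 : i = k <;> by_cases h3 : i = m <;>
    by_cases h4 : j = k <;> by_cases h5 : j = m <;> by_cases h6 : k = m <;>
    first
      | (exfalso; omega)
      | (simp_all [kdel, @eq_comm ℕ]; try norm_num)

/-- In the Hilbert-Schmidt case (all weights equal to 1), for
i, j >= 1 and N > max i j, the truncated Ricci curvature equals
(1/2)(3 d_ij - 2 d_ij N - N). -/
theorem stmt13 {gi : Type*} [NormedAddCommGroup gi] [InnerProductSpace ℝ gi]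
    (lam : ℕ → ℝ) (hpos : ∀ i, 0 < lam i) (c : ℝ) (hbdd : ∀ i, lam i ≤ c)
    (ξ : ℕ → ℕ → gi) (honb : Orthonormal ℝ (fun p : ℕ × ℕ => ξ p.1 p.2))
    (htot : Dense ((Submodule.span ℝ (Set.range fun p : ℕ × ℕ => ξ p.1 p.2) :
      Submodule ℝ gi) : Set gi))
    (br nab : gi →ₗ[ℝ] gi →ₗ[ℝ] gi)
    (hbr : ∀ i j k m : ℕ, br (ξ i j) (ξ k m) =
      (if j = k then (lam j) ^ 2 else 0) • ξ i m -
        (if i = m then (lam i) ^ 2 else 0) • ξ k j)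
    (hnab : ∀ x y z : gi,
      ⟪nab x y, z⟫ = (1 / 2) * (⟪br x y, z⟫ - ⟪br y z, x⟫ + ⟪br z x, y⟫))
    (hlam : ∀ i, lam i = 1)
    (i j N : ℕ) (hi : 1 ≤ i) (hj : 1 ≤ j) (hN : max i j < N) :
    RicN nab br ξ N i j =
      (1 / 2) * (3 * kdel i j - 2 * kdel i j * (N : ℝ) - (N : ℝ)) := by
  have hON : ∀ a b c d : ℕ, ⟪ξ a b, ξ c d⟫ = kdel a c * kdel b d := by
    intro a b c d
    have h := orthonormal_iff_ite.mp honb (a, b) (c, d)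
    simp only at h
    rw [h]
    simp only [kdel, Prod.mk.injEq]
    split_ifs with h1 h2 h3 h4 h5 <;> simp_all
  have hz : ∀ u : gi, (∀ p q : ℕ, ⟪u, ξ p q⟫ = 0) → u = 0 := by
    intro u hu
    have hcl : IsClosed {z : gi | ⟪u, z⟫ = 0} :=
      isClosed_eq (innerSL ℝ u).continuous continuous_const
    have hsub : ((Submodule.span ℝ (Set.range fun p : ℕ × ℕ => ξ p.1 p.2) :
        Submodule ℝ gi) : Set gi) ⊆ {z : gi | ⟪u, z⟫ = 0} := by
      intro z hz
      refine Submodule.span_induction ?_ ?_ ?_ ?_ hz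
      · rintro x ⟨p, rfl⟩; exact hu p.1 p.2
      · simp
      · intro x y _ _ hx hy; simp only [Set.mem_setOf_eq] at *
        rw [inner_add_right, hx, hy, add_zero]
      · intro r x _ hx; simp only [Set.mem_setOf_eq] at *
        rw [real_inner_smul_right, hx, mul_zero]
    have hall : ∀ z : gi, ⟪u, z⟫ = 0 := fun z =>
      (hcl.closure_subset_iff.mpr hsub) (htot z)
    exact inner_self_eq_zero.mp (hall u)
  have hext : ∀ u v : gi, (∀ p q : ℕ, ⟪u, ξ p q⟫ = ⟪v, ξ p q⟫) → u = v := by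
    intro u v h
    have : u - v = 0 := by
      apply hz
      intro p q
      rw [inner_sub_left, h p q, sub_self]
    exact sub_eq_zero.mp this
  have hb1 : ∀ a b c d : ℕ, br (ξ a b) (ξ c d) = kdel b c • ξ a d - kdel a d • ξ c b := by
    intro a b c d
    rw [hbr]
    simp [kdel, hlam]
  have hnb : ∀ a b c d : ℕ, nab (ξ a b) (ξ c d) = (1/2 : ℝ) •
      (kdel b c • ξ a d - kdel a d • ξ c b - kdel c a • ξ d b
        + kdel d b • ξ a c + kdel b d • ξ c a - kdel a c • ξ b d) := by
    intro a b c d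
    apply hext
    intro p q
    rw [hnab, hb1, hb1, hb1]
    simp only [inner_sub_left, inner_add_left, real_inner_smul_left, hON]
    rw [kdel_comm' q b, kdel_comm' p a, kdel_comm' q a, kdel_comm' p c, kdel_comm' p b,
      kdel_comm' q d]
    ring
  have hK : ∀ k m : ℕ, Ksec nab br (ξ i j) (ξ k m) =
      kdel j k/4 + kdel i m/4 - kdel i k/2 - kdel j m/2
      - (1/2)*(kdel j k*kdel j m) + kdel i k*kdel j m - (1/2)*(kdel i k*kdel i m)
      - (1/2)*(kdel i j*kdel j m) - (1/2)*(kdel i j*kdel i k)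
      + (3/2)*(kdel i j*kdel i k*kdel i m) := by
    intro k m
    exact Ksec_formula' ξ br nab hON hb1 hnb i j k m
  have hiN : i ∈ Finset.Icc 1 N := by simp only [Finset.mem_Icc]; omega
  have hjN : j ∈ Finset.Icc 1 N := by simp only [Finset.mem_Icc]; omega
  have hcard : ((Finset.Icc 1 N).card : ℝ) = N := by simp [Nat.card_Icc]
  have hsum1 : ∀ a ∈ Finset.Icc 1 N, ∀ c : ℝ,
      (∑ m ∈ Finset.Icc 1 N, kdel a m * c) = c := by
    intro a ha c
    rw [← Finset.sum_mul]
    have h1 : (∑ m ∈ Finset.Icc 1 N, kdel a m) = 1 := by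
      simp only [kdel, Finset.sum_ite_eq, ha, if_true]
    rw [h1, one_mul]
  have step1 : ∀ k ∈ Finset.Icc 1 N, ∑ m ∈ Finset.Icc 1 N, Ksec nab br (ξ i j) (ξ k m) =
      (N:ℝ) * (kdel j k/4 - kdel i k/2 - (1/2)*(kdel i j*kdel i k))
      + (1/4 - (1/2)*kdel i k + (3/2)*(kdel i j*kdel i k))
      + (-1/2 - (1/2)*kdel j k + kdel i k - (1/2)*kdel i j) := by
    intro k _
    have e : ∀ m ∈ Finset.Icc 1 N, Ksec nab br (ξ i j) (ξ k m) =
        (kdel j k/4 - kdel i k/2 - (1/2)*(kdel i j*kdel i k))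
        + kdel i m * (1/4 - (1/2)*kdel i k + (3/2)*(kdel i j*kdel i k))
        + kdel j m * (-1/2 - (1/2)*kdel j k + kdel i k - (1/2)*kdel i j) := by
      intro m _; rw [hK k m]; ring
    rw [Finset.sum_congr rfl e, Finset.sum_add_distrib, Finset.sum_add_distrib,
      Finset.sum_const, hsum1 i hiN, hsum1 j hjN, nsmul_eq_mul, hcard]
  rw [RicN, Finset.sum_congr rfl step1]
  have e2 : ∀ k ∈ Finset.Icc 1 N,
      (N:ℝ) * (kdel j k/4 - kdel i k/2 - (1/2)*(kdel i j*kdel i k))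
      + (1/4 - (1/2)*kdel i k + (3/2)*(kdel i j*kdel i k))
      + (-1/2 - (1/2)*kdel j k + kdel i k - (1/2)*kdel i j) =
      (-1/4 - (1/2)*kdel i j)
      + kdel j k * ((N:ℝ)/4 - 1/2)
      + kdel i k * (1/2 - (N:ℝ)/2 + kdel i j * (3/2 - (N:ℝ)/2)) := by
    intro k _; ring
  rw [Finset.sum_congr rfl e2, Finset.sum_add_distrib, Finset.sum_add_distrib,
    Finset.sum_const, hsum1 j hjN, hsum1 i hiN, nsmul_eq_mul, hcard]
  ring
end
end

section
/- In the general weighted Hilbert–Schmidt Lie algebra, the Levi-Civita connection satisfies, for all a, b, c, d: ∇_{ξ_{ab}} ξ_{cd} = (1/2)(δ_{bc}λ_b²ξ_{ad} − δ_{ad}λ_a²ξ_{cb} − δ_{ac}λ_d²ξ_{db} + δ_{bd}λ_c²ξ_{ac} + δ_{bd}λ_a²ξ_{ca} − δ_{ac}λ_b²ξ_{bd}). -/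
noncomputable section

open Filter
open scoped RealInnerProductSpace

variable {gi : Type*} [NormedAddCommGroup gi] [InnerProductSpace ℝ gi]

/-- In the general weighted Hilbert-Schmidt Lie algebra, the
Levi-Civita connection satisfies the stated explicit formula on basis elements. -/
theorem stmt14 {gi : Type*} [NormedAddCommGroup gi] [InnerProductSpace ℝ gi]
    (lam : ℕ → ℝ) (hpos : ∀ i, 0 < lam i) (c : ℝ) (hbdd : ∀ i, lam i ≤ c)
    (ξ : ℕ → ℕ → gi) (honb : Orthonormal ℝ (fun p : ℕ × ℕ => ξ p.1 p.2))
    (htot : Dense ((Submodule.span ℝ (Set.range fun p : ℕ × ℕ => ξ p.1 p.2) :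
      Submodule ℝ gi) : Set gi))
    (br nab : gi →ₗ[ℝ] gi →ₗ[ℝ] gi)
    (hbr : ∀ i j k m : ℕ, br (ξ i j) (ξ k m) =
      (if j = k then (lam j) ^ 2 else 0) • ξ i m -
        (if i = m then (lam i) ^ 2 else 0) • ξ k j)
    (hnab : ∀ x y z : gi,
      ⟪nab x y, z⟫ = (1 / 2) * (⟪br x y, z⟫ - ⟪br y z, x⟫ + ⟪br z x, y⟫))
    (a b c' d : ℕ) :
    nab (ξ a b) (ξ c' d) =
      (2⁻¹ : ℝ) • ((if b = c' then (lam b) ^ 2 else 0) • ξ a d -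
        (if a = d then (lam a) ^ 2 else 0) • ξ c' b -
        (if a = c' then (lam d) ^ 2 else 0) • ξ d b +
        (if b = d then (lam c') ^ 2 else 0) • ξ a c' +
        (if b = d then (lam a) ^ 2 else 0) • ξ c' a -
        (if a = c' then (lam b) ^ 2 else 0) • ξ b d) := by

  classical
  have hkdc : ∀ x y : ℕ, kdel x y = kdel y x := by
    intro x y; simp [kdel, eq_comm]
  have hkdp : ∀ x y : ℕ, kdel x y * lam x ^ 2 = kdel x y * lam y ^ 2 := by
    intro x y
    by_cases h : x = y
    · subst h; rfl
    · simp [kdel, h]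
  have hkd : ∀ (x y : ℕ) (r : ℝ), (if x = y then r else 0) = kdel x y * r := by
    intro x y r; simp [kdel, ite_mul]
  have hxi : ∀ i j k m : ℕ, ⟪ξ i j, ξ k m⟫ = kdel i k * kdel j m := by
    intro i j k m
    have h := orthonormal_iff_ite.mp honb (i, j) (k, m)
    simp only at h
    rw [h]
    by_cases h1 : i = k <;> by_cases h2 : j = m <;>
      simp [kdel, h1, h2, Prod.ext_iff]
  have key : ∀ k m : ℕ, ⟪nab (ξ a b) (ξ c' d) -
      ((2⁻¹ : ℝ) • ((if b = c' then (lam b) ^ 2 else 0) • ξ a d -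
        (if a = d then (lam a) ^ 2 else 0) • ξ c' b -
        (if a = c' then (lam d) ^ 2 else 0) • ξ d b +
        (if b = d then (lam c') ^ 2 else 0) • ξ a c' +
        (if b = d then (lam a) ^ 2 else 0) • ξ c' a -
        (if a = c' then (lam b) ^ 2 else 0) • ξ b d)), ξ k m⟫ = 0 := by
    intro k m
    have L : ⟪nab (ξ a b) (ξ c' d), ξ k m⟫ =
        (1/2) * ((kdel b c' * lam b ^ 2 * (kdel a k * kdel d m) -
            kdel a d * lam a ^ 2 * (kdel c' k * kdel b m)) -
          (kdel d k * lam d ^ 2 * (kdel c' a * kdel m b) -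
            kdel c' m * lam c' ^ 2 * (kdel k a * kdel d b)) +
          (kdel m a * lam m ^ 2 * (kdel k c' * kdel b d) -
            kdel k b * lam k ^ 2 * (kdel a c' * kdel m d))) := by
      rw [hnab, hbr a b c' d, hbr c' d k m, hbr k m a b]
      simp only [inner_sub_left, real_inner_smul_left, hxi, hkd]
    have R : ⟪((2⁻¹ : ℝ) • ((if b = c' then (lam b) ^ 2 else 0) • ξ a d -
        (if a = d then (lam a) ^ 2 else 0) • ξ c' b -
        (if a = c' then (lam d) ^ 2 else 0) • ξ d b +
        (if b = d then (lam c') ^ 2 else 0) • ξ a c' +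
        (if b = d then (lam a) ^ 2 else 0) • ξ c' a -
        (if a = c' then (lam b) ^ 2 else 0) • ξ b d) : gi), ξ k m⟫ =
        (2⁻¹ : ℝ) * (kdel b c' * lam b ^ 2 * (kdel a k * kdel d m) -
          kdel a d * lam a ^ 2 * (kdel c' k * kdel b m) -
          kdel a c' * lam d ^ 2 * (kdel d k * kdel b m) +
          kdel b d * lam c' ^ 2 * (kdel a k * kdel c' m) +
          kdel b d * lam a ^ 2 * (kdel c' k * kdel a m) -
          kdel a c' * lam b ^ 2 * (kdel b k * kdel d m)) := by
      simp only [inner_sub_left, inner_add_left, real_inner_smul_left, hxi, hkd]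
    rw [inner_sub_left, L, R, hkdp m a, hkdp k b,
      hkdc c' a, hkdc m b, hkdc k a, hkdc d b, hkdc m a, hkdc k c', hkdc k b, hkdc m d]
    ring
  set u : gi := nab (ξ a b) (ξ c' d) -
      ((2⁻¹ : ℝ) • ((if b = c' then (lam b) ^ 2 else 0) • ξ a d -
        (if a = d then (lam a) ^ 2 else 0) • ξ c' b -
        (if a = c' then (lam d) ^ 2 else 0) • ξ d b +
        (if b = d then (lam c') ^ 2 else 0) • ξ a c' +
        (if b = d then (lam a) ^ 2 else 0) • ξ c' a -
        (if a = c' then (lam b) ^ 2 else 0) • ξ b d)) with hu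
  have hspan : ∀ z ∈ (Submodule.span ℝ (Set.range fun p : ℕ × ℕ => ξ p.1 p.2) :
      Submodule ℝ gi), ⟪u, z⟫ = 0 := by
    intro z hz
    induction hz using Submodule.span_induction with
    | mem x hx => obtain ⟨⟨k, m⟩, rfl⟩ := hx; exact key k m
    | zero => simp
    | add x y _ _ hx hy => rw [inner_add_right, hx, hy]; ring
    | smul r x _ hx => rw [real_inner_smul_right, hx]; ring
  have hall : ∀ z : gi, ⟪u, z⟫ = 0 := by
    have hcont : Continuous fun z : gi => ⟪u, z⟫ := (innerSL ℝ u).continuous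
    have heq : (fun z : gi => ⟪u, z⟫) = fun _ => (0:ℝ) :=
      Continuous.ext_on htot hcont continuous_const (fun z hz => hspan z hz)
    intro z; exact congrFun heq z
  have : u = 0 := by
    have := hall u
    rwa [real_inner_self_eq_norm_sq, pow_eq_zero_iff (by norm_num), norm_eq_zero] at this
  rw [hu] at this
  exact sub_eq_zero.mp this
end
end
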